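/- If n ≡ 2 (mod 4) or n ≡ 3 (mod 4), then 4 divides Q(n), the number of n-queens configurations. -/
import Mathlib

open scoped Classical

/-- The `n × n` board, with squares indexed by `[n] × [n]` where `[n] = {1, …, n}`. -/
def board (n : ℕ) : Finset (ℕ × ℕ) := Finset.Icc 1 n ×ˢ Finset.Icc 1 n

/-- `Q` is an `n`-queens configuration: `Q ⊆ [n] × [n]`, `|Q| = n`, and every row,
column, diagonal (`j - i + n = k`) and anti-diagonal (`i + j - 1 = k`) contains at
most one element of `Q`. -/
def IsQueensConfig (n : ℕ) (Q : Finset (ℕ × ℕ)) : Prop :=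
  Q ⊆ board n ∧ Q.card = n ∧
  (∀ p ∈ Q, ∀ q ∈ Q, p.1 = q.1 → p = q) ∧
  (∀ p ∈ Q, ∀ q ∈ Q, p.2 = q.2 → p = q) ∧
  (∀ p ∈ Q, ∀ q ∈ Q, p.2 + n - p.1 = q.2 + n - q.1 → p = q) ∧
  (∀ p ∈ Q, ∀ q ∈ Q, p.1 + p.2 - 1 = q.1 + q.2 - 1 → p = q)

/-- `Q(n)`: the number of `n`-queens configurations. -/
noncomputable def queensCount (n : ℕ) : ℕ :=
  ((board n).powerset.filter (fun Q => IsQueensConfig n Q)).card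

/-- The vertical reflection `s`, `sQ = {(i, n+1-j) : (i,j) ∈ Q}`. -/
def sAct (n : ℕ) (Q : Finset (ℕ × ℕ)) : Finset (ℕ × ℕ) :=
  Q.image (fun p => (p.1, n + 1 - p.2))

/-- The 90° counter-clockwise rotation `r`, `rQ = {(n+1-j, i) : (i,j) ∈ Q}`. -/
def rAct (n : ℕ) (Q : Finset (ℕ × ℕ)) : Finset (ℕ × ℕ) :=
  Q.image (fun p => (n + 1 - p.2, p.1))

/- ----------------- auxiliary counting lemmas ----------------- -/

/-- If `g` acts on a finite set with `g⁴ = id` and no fixed points of `g²`,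
then the cardinality is divisible by 4. -/
lemma cyc4 {α : Type*} [DecidableEq α] (g : α → α) :
    ∀ A : Finset α, (∀ a ∈ A, g a ∈ A) → (∀ a ∈ A, g (g (g (g a))) = a) →
      (∀ a ∈ A, g (g a) ≠ a) → 4 ∣ A.card := by
  intro A
  induction A using Finset.strongInductionOn with
  | _ A ih =>
    intro hmem h4 h2
    rcases A.eq_empty_or_nonempty with rfl | ⟨a, ha⟩
    · simp
    · have hinj : ∀ x ∈ A, ∀ y ∈ A, g x = g y → x = y := by
        intro x hx y hy hxy
        have hx4 := h4 x hx
        have hy4 := h4 y hy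
        rw [hxy] at hx4
        rw [← hx4, hy4]
      have ha1 : g a ∈ A := hmem a ha
      have ha2 : g (g a) ∈ A := hmem _ ha1
      have ha3 : g (g (g a)) ∈ A := hmem _ ha2
      have d1 : a ≠ g a := by
        intro he
        exact h2 a ha (by rw [← he, ← he])
      have d2 : a ≠ g (g a) := fun he => h2 a ha he.symm
      have d3 : a ≠ g (g (g a)) := by
        intro he
        -- apply g to both sides: g a = g⁴ a = a
        have := congrArg g he
        rw [h4 a ha] at this
        exact d1 this.symm
      have d4 : g a ≠ g (g a) := fun he => d1 (hinj a ha _ ha1 he)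
      have d5 : g a ≠ g (g (g a)) := fun he => d2 (hinj a ha _ ha2 he)
      have d6 : g (g a) ≠ g (g (g a)) := fun he => d4 (hinj _ ha1 _ ha2 he)
      set O : Finset α := {a, g a, g (g a), g (g (g a))} with hO
      have hOsub : O ⊆ A := by
        intro x hx
        simp only [hO, Finset.mem_insert, Finset.mem_singleton] at hx
        rcases hx with rfl | rfl | rfl | rfl <;> assumption
      have hOcard : O.card = 4 := by
        rw [hO]
        rw [Finset.card_insert_of_notMem (by simp [d1, d2, d3]),
            Finset.card_insert_of_notMem (by simp [d4, d5]),
            Finset.card_insert_of_notMem (by simp [d6]),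
            Finset.card_singleton]
      have hmemO : ∀ x ∈ O, g x ∈ O := by
        intro x hx
        simp only [hO, Finset.mem_insert, Finset.mem_singleton] at hx ⊢
        rcases hx with rfl | rfl | rfl | rfl
        · tauto
        · tauto
        · tauto
        · rw [h4 a ha]; tauto
      have hA' : A \ O ⊂ A :=
        Finset.sdiff_ssubset hOsub ⟨a, by simp [hO]⟩
      have hclosed : ∀ x ∈ A \ O, g x ∈ A \ O := by
        intro x hx
        rw [Finset.mem_sdiff] at hx ⊢
        refine ⟨hmem x hx.1, ?_⟩
        intro hgx
        apply hx.2
        -- g x ∈ O, O is g-stable and g is injective, O = g '' O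
        simp only [hO, Finset.mem_insert, Finset.mem_singleton] at hgx ⊢
        rcases hgx with he | he | he | he
        · -- g x = a = g (g³ a)
          have : g x = g (g (g (g a))) := by rw [h4 a ha, he]
          have := hinj x hx.1 _ ha3 this
          tauto
        · have := hinj x hx.1 _ ha he
          tauto
        · have := hinj x hx.1 _ ha1 he
          tauto
        · have := hinj x hx.1 _ ha2 he
          tauto
      have hdvd : 4 ∣ (A \ O).card :=
        ih _ hA' hclosed (fun x hx => h4 x (Finset.mem_sdiff.mp hx).1)
          (fun x hx => h2 x (Finset.mem_sdiff.mp hx).1)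
      have hcs : (A \ O).card = A.card - O.card := Finset.card_sdiff_of_subset hOsub
      have hle : O.card ≤ A.card := Finset.card_le_card hOsub
      omega

/-- If two commuting involutions `f`, `g` act on a finite set with `f`, `g`, `f∘g`
all fixed-point-free, then the cardinality is divisible by 4. -/
lemma klein4 {α : Type*} [DecidableEq α] (f g : α → α) :
    ∀ A : Finset α, (∀ a ∈ A, f a ∈ A) → (∀ a ∈ A, g a ∈ A) →
      (∀ a ∈ A, f (f a) = a) → (∀ a ∈ A, g (g a) = a) →
      (∀ a ∈ A, f (g a) = g (f a)) →
      (∀ a ∈ A, f a ≠ a) → (∀ a ∈ A, g a ≠ a) → (∀ a ∈ A, f (g a) ≠ a) →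
      4 ∣ A.card := by
  intro A
  induction A using Finset.strongInductionOn with
  | _ A ih =>
    intro hfm hgm hf2 hg2 hcomm hf hg hfg
    rcases A.eq_empty_or_nonempty with rfl | ⟨a, ha⟩
    · simp
    · have hfa : f a ∈ A := hfm a ha
      have hga : g a ∈ A := hgm a ha
      have hfga : f (g a) ∈ A := hfm _ hga
      have d1 : a ≠ f a := fun he => hf a ha he.symm
      have d2 : a ≠ g a := fun he => hg a ha he.symm
      have d3 : a ≠ f (g a) := fun he => hfg a ha he.symm
      have d4 : f a ≠ g a := by
        intro he
        apply d3
        have := congrArg f he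
        rw [hf2 a ha] at this
        exact this
      have d5 : f a ≠ f (g a) := by
        intro he
        apply d2
        have := congrArg f he
        rw [hf2 a ha, hf2 _ hga] at this
        exact this
      have d6 : g a ≠ f (g a) := by
        intro he
        apply d1
        have := congrArg g he
        rw [hg2 a ha, ← hcomm _ hga, hg2 a ha] at this
        exact this
      set O : Finset α := {a, f a, g a, f (g a)} with hO
      have hOsub : O ⊆ A := by
        intro x hx
        simp only [hO, Finset.mem_insert, Finset.mem_singleton] at hx
        rcases hx with rfl | rfl | rfl | rfl <;> assumption
      have hOcard : O.card = 4 := by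
        rw [hO]
        rw [Finset.card_insert_of_notMem (by simp [d1, d2, d3]),
            Finset.card_insert_of_notMem (by simp [d4, d5]),
            Finset.card_insert_of_notMem (by simp [d6]),
            Finset.card_singleton]
      have hA' : A \ O ⊂ A :=
        Finset.sdiff_ssubset hOsub ⟨a, by simp [hO]⟩
      have hclosedf : ∀ x ∈ A \ O, f x ∈ A \ O := by
        intro x hx
        rw [Finset.mem_sdiff] at hx ⊢
        refine ⟨hfm x hx.1, ?_⟩
        intro hgx
        apply hx.2
        simp only [hO, Finset.mem_insert, Finset.mem_singleton] at hgx ⊢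
        have hx2 := hf2 x hx.1
        rcases hgx with he | he | he | he
        · have : x = f a := by rw [← hx2, he]
          tauto
        · have : x = a := by rw [← hx2, he, hf2 a ha]
          tauto
        · have : x = f (g a) := by rw [← hx2, he]
          tauto
        · have : x = g a := by rw [← hx2, he, hf2 _ hga]
          tauto
      have hclosedg : ∀ x ∈ A \ O, g x ∈ A \ O := by
        intro x hx
        rw [Finset.mem_sdiff] at hx ⊢
        refine ⟨hgm x hx.1, ?_⟩
        intro hgx
        apply hx.2
        simp only [hO, Finset.mem_insert, Finset.mem_singleton] at hgx ⊢
        have hx2 := hg2 x hx.1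
        rcases hgx with he | he | he | he
        · have : x = g a := by rw [← hx2, he]
          tauto
        · have : x = f (g a) := by
            rw [← hx2, he, ← hcomm a ha]
            -- g (f a) vs f (g a)
          tauto
        · have : x = a := by rw [← hx2, he, hg2 a ha]
          tauto
        · have : x = f a := by
            rw [← hx2, he, ← hcomm _ hga, hg2 a ha]
          tauto
      have hdvd : 4 ∣ (A \ O).card := by
        refine ih _ hA' hclosedf hclosedg ?_ ?_ ?_ ?_ ?_ ?_ <;>
          intro x hx <;>
          first
            | exact hf2 x (Finset.mem_sdiff.mp hx).1
            | exact hg2 x (Finset.mem_sdiff.mp hx).1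
            | exact hcomm x (Finset.mem_sdiff.mp hx).1
            | exact hf x (Finset.mem_sdiff.mp hx).1
            | exact hg x (Finset.mem_sdiff.mp hx).1
            | exact hfg x (Finset.mem_sdiff.mp hx).1
      have hcs : (A \ O).card = A.card - O.card := Finset.card_sdiff_of_subset hOsub
      have hle : O.card ≤ A.card := Finset.card_le_card hOsub
      omega

/- ----------------- geometric lemmas ----------------- -/

lemma mem_board {n : ℕ} {p : ℕ × ℕ} :
    p ∈ board n ↔ 1 ≤ p.1 ∧ p.1 ≤ n ∧ 1 ≤ p.2 ∧ p.2 ≤ n := by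
  simp [board, Finset.mem_product, Finset.mem_Icc]
  tauto

lemma rAct_config {n : ℕ} {Q : Finset (ℕ × ℕ)} (h : IsQueensConfig n Q) :
    IsQueensConfig n (rAct n Q) := by
  obtain ⟨hsub, hcard, hrow, hcol, hdiag, hadiag⟩ := h
  have hb : ∀ p ∈ Q, 1 ≤ p.1 ∧ p.1 ≤ n ∧ 1 ≤ p.2 ∧ p.2 ≤ n :=
    fun p hp => mem_board.mp (hsub hp)
  refine ⟨?_, ?_, ?_, ?_, ?_, ?_⟩
  · intro x hx
    simp only [rAct, Finset.mem_image] at hx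
    obtain ⟨p, hp, rfl⟩ := hx
    have := hb p hp
    rw [mem_board]
    dsimp only
    omega
  · rw [rAct, Finset.card_image_of_injOn, hcard]
    rintro ⟨a, b⟩ hp ⟨c, d⟩ hq heq
    have h1 := hb _ hp
    have h2 := hb _ hq
    simp only [Prod.mk.injEq] at *
    omega
  · rintro p hp q hq heq
    simp only [rAct, Finset.mem_image] at hp hq
    obtain ⟨⟨a, b⟩, hp, rfl⟩ := hp
    obtain ⟨⟨c, d⟩, hq, rfl⟩ := hq
    have h1 := hb _ hp
    have h2 := hb _ hq
    dsimp only at *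
    have key := hcol _ hp _ hq (show b = d by omega)
    simp only [Prod.mk.injEq] at key ⊢
    omega
  · rintro p hp q hq heq
    simp only [rAct, Finset.mem_image] at hp hq
    obtain ⟨⟨a, b⟩, hp, rfl⟩ := hp
    obtain ⟨⟨c, d⟩, hq, rfl⟩ := hq
    have h1 := hb _ hp
    have h2 := hb _ hq
    dsimp only at *
    have key := hrow _ hp _ hq (show a = c by omega)
    simp only [Prod.mk.injEq] at key ⊢
    omega
  · rintro p hp q hq heq
    simp only [rAct, Finset.mem_image] at hp hq
    obtain ⟨⟨a, b⟩, hp, rfl⟩ := hp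
    obtain ⟨⟨c, d⟩, hq, rfl⟩ := hq
    have h1 := hb _ hp
    have h2 := hb _ hq
    dsimp only at *
    have key := hadiag _ hp _ hq (show a + b - 1 = c + d - 1 by omega)
    simp only [Prod.mk.injEq] at key ⊢
    omega
  · rintro p hp q hq heq
    simp only [rAct, Finset.mem_image] at hp hq
    obtain ⟨⟨a, b⟩, hp, rfl⟩ := hp
    obtain ⟨⟨c, d⟩, hq, rfl⟩ := hq
    have h1 := hb _ hp
    have h2 := hb _ hq
    dsimp only at *
    have key := hdiag _ hp _ hq (show b + n - a = d + n - c by omega)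
    simp only [Prod.mk.injEq] at key ⊢
    omega

lemma sAct_config {n : ℕ} {Q : Finset (ℕ × ℕ)} (h : IsQueensConfig n Q) :
    IsQueensConfig n (sAct n Q) := by
  obtain ⟨hsub, hcard, hrow, hcol, hdiag, hadiag⟩ := h
  have hb : ∀ p ∈ Q, 1 ≤ p.1 ∧ p.1 ≤ n ∧ 1 ≤ p.2 ∧ p.2 ≤ n :=
    fun p hp => mem_board.mp (hsub hp)
  refine ⟨?_, ?_, ?_, ?_, ?_, ?_⟩
  · intro x hx
    simp only [sAct, Finset.mem_image] at hx
    obtain ⟨p, hp, rfl⟩ := hx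
    have := hb p hp
    rw [mem_board]
    dsimp only
    omega
  · rw [sAct, Finset.card_image_of_injOn, hcard]
    rintro ⟨a, b⟩ hp ⟨c, d⟩ hq heq
    have h1 := hb _ hp
    have h2 := hb _ hq
    simp only [Prod.mk.injEq] at *
    omega
  · rintro p hp q hq heq
    simp only [sAct, Finset.mem_image] at hp hq
    obtain ⟨⟨a, b⟩, hp, rfl⟩ := hp
    obtain ⟨⟨c, d⟩, hq, rfl⟩ := hq
    have h1 := hb _ hp
    have h2 := hb _ hq
    dsimp only at *
    have key := hrow _ hp _ hq (show a = c by omega)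
    simp only [Prod.mk.injEq] at key ⊢
    omega
  · rintro p hp q hq heq
    simp only [sAct, Finset.mem_image] at hp hq
    obtain ⟨⟨a, b⟩, hp, rfl⟩ := hp
    obtain ⟨⟨c, d⟩, hq, rfl⟩ := hq
    have h1 := hb _ hp
    have h2 := hb _ hq
    dsimp only at *
    have key := hcol _ hp _ hq (show b = d by omega)
    simp only [Prod.mk.injEq] at key ⊢
    omega
  · rintro p hp q hq heq
    simp only [sAct, Finset.mem_image] at hp hq
    obtain ⟨⟨a, b⟩, hp, rfl⟩ := hp
    obtain ⟨⟨c, d⟩, hq, rfl⟩ := hq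
    have h1 := hb _ hp
    have h2 := hb _ hq
    dsimp only at *
    have key := hadiag _ hp _ hq (show a + b - 1 = c + d - 1 by omega)
    simp only [Prod.mk.injEq] at key ⊢
    omega
  · rintro p hp q hq heq
    simp only [sAct, Finset.mem_image] at hp hq
    obtain ⟨⟨a, b⟩, hp, rfl⟩ := hp
    obtain ⟨⟨c, d⟩, hq, rfl⟩ := hq
    have h1 := hb _ hp
    have h2 := hb _ hq
    dsimp only at *
    have key := hdiag _ hp _ hq (show b + n - a = d + n - c by omega)
    simp only [Prod.mk.injEq] at key ⊢
    omega

lemma rAct_four {n : ℕ} {Q : Finset (ℕ × ℕ)} (hQ : Q ⊆ board n) :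
    rAct n (rAct n (rAct n (rAct n Q))) = Q := by
  unfold rAct
  rw [Finset.image_image, Finset.image_image, Finset.image_image]
  conv_rhs => rw [← Finset.image_id (s := Q)]
  apply Finset.image_congr
  rintro ⟨a, b⟩ hp
  have := mem_board.mp (hQ hp)
  dsimp only at *
  simp only [Function.comp_apply, Prod.mk.injEq, id_eq, true_and, and_true] <;> omega

lemma sAct_sAct {n : ℕ} {Q : Finset (ℕ × ℕ)} (hQ : Q ⊆ board n) :
    sAct n (sAct n Q) = Q := by
  unfold sAct
  rw [Finset.image_image]
  conv_rhs => rw [← Finset.image_id (s := Q)]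
  apply Finset.image_congr
  rintro ⟨a, b⟩ hp
  have := mem_board.mp (hQ hp)
  dsimp only at *
  simp only [Function.comp_apply, Prod.mk.injEq, id_eq, true_and, and_true] <;> omega

lemma sr2_comm {n : ℕ} {Q : Finset (ℕ × ℕ)} (hQ : Q ⊆ board n) :
    sAct n (rAct n (rAct n Q)) = rAct n (rAct n (sAct n Q)) := by
  unfold sAct rAct
  simp only [Finset.image_image]
  apply Finset.image_congr
  rintro ⟨a, b⟩ hp
  have := mem_board.mp (hQ hp)
  dsimp only at *
  simp only [Function.comp_apply, Prod.mk.injEq, true_and, and_true] <;> omega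

lemma rsr2 {n : ℕ} {Q : Finset (ℕ × ℕ)} (hQ : Q ⊆ board n) :
    rAct n (sAct n (rAct n (rAct n Q))) = sAct n (rAct n Q) := by
  unfold sAct rAct
  simp only [Finset.image_image]
  apply Finset.image_congr
  rintro ⟨a, b⟩ hp
  have := mem_board.mp (hQ hp)
  dsimp only at *
  simp only [Function.comp_apply, Prod.mk.injEq, true_and, and_true] <;> omega

/-- No configuration with `n ≥ 2` is fixed by the vertical reflection. -/
lemma no_s_fixed {n : ℕ} {Q : Finset (ℕ × ℕ)} (h : IsQueensConfig n Q)
    (hn : 2 ≤ n) : sAct n Q ≠ Q := by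
  intro hfix
  obtain ⟨hsub, hcard, hrow, hcol, hdiag, hadiag⟩ := h
  have hb : ∀ p ∈ Q, 1 ≤ p.1 ∧ p.1 ≤ n ∧ 1 ≤ p.2 ∧ p.2 ≤ n :=
    fun p hp => mem_board.mp (hsub hp)
  have hmid : ∀ p ∈ Q, 2 * p.2 = n + 1 := by
    intro p hp
    have hmem : (p.1, n + 1 - p.2) ∈ Q := by
      rw [← hfix]
      exact Finset.mem_image_of_mem _ hp
    have key := hrow p hp _ hmem rfl
    have := hb p hp
    have := congrArg Prod.snd key
    dsimp only at this
    omega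
  obtain ⟨p, hp, q, hq, hne⟩ := Finset.one_lt_card.mp (by omega : 1 < Q.card)
  exact hne (hcol p hp q hq (by have := hmid p hp; have := hmid q hq; omega))

/-- No configuration with `n ≥ 2` is fixed by the anti-diagonal reflection `s∘r`. -/
lemma no_sr_fixed {n : ℕ} {Q : Finset (ℕ × ℕ)} (h : IsQueensConfig n Q)
    (hn : 2 ≤ n) : sAct n (rAct n Q) ≠ Q := by
  intro hfix
  obtain ⟨hsub, hcard, hrow, hcol, hdiag, hadiag⟩ := h
  have hb : ∀ p ∈ Q, 1 ≤ p.1 ∧ p.1 ≤ n ∧ 1 ≤ p.2 ∧ p.2 ≤ n :=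
    fun p hp => mem_board.mp (hsub hp)
  have himg : sAct n (rAct n Q) = Q.image (fun p => (n + 1 - p.2, n + 1 - p.1)) := by
    unfold sAct rAct
    rw [Finset.image_image]
    apply Finset.image_congr
    rintro ⟨a, b⟩ hp
    have := mem_board.mp (hsub hp)
    dsimp only at *
    simp only [Function.comp_apply, Prod.mk.injEq, true_and, and_true] <;> omega
  rw [himg] at hfix
  have hanti : ∀ p ∈ Q, p.1 + p.2 = n + 1 := by
    intro p hp
    have hmem : ((n + 1 - p.2, n + 1 - p.1) : ℕ × ℕ) ∈ Q := by
      rw [← hfix]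
      exact Finset.mem_image_of_mem _ hp
    have hbp := hb p hp
    have hbq := hb _ hmem
    have key := hdiag p hp _ hmem (by dsimp only; omega)
    have := congrArg Prod.fst key
    dsimp only at this
    omega
  obtain ⟨p, hp, q, hq, hne⟩ := Finset.one_lt_card.mp (by omega : 1 < Q.card)
  refine hne (hadiag p hp q hq ?_)
  have := hanti p hp
  have := hanti q hq
  omega

/-- No configuration is fixed by the rotation `r` when `n % 4 ∈ {2, 3}`. -/
lemma no_r_fixed {n : ℕ} {Q : Finset (ℕ × ℕ)} (h : IsQueensConfig n Q)
    (hn : n % 4 = 2 ∨ n % 4 = 3) : rAct n Q ≠ Q := by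
  intro hfix
  obtain ⟨hsub, hcard, hrow, hcol, hdiag, hadiag⟩ := h
  have hb : ∀ p ∈ Q, 1 ≤ p.1 ∧ p.1 ≤ n ∧ 1 ≤ p.2 ∧ p.2 ≤ n :=
    fun p hp => mem_board.mp (hsub hp)
  have hmemρ : ∀ p ∈ Q, ((n + 1 - p.2, p.1) : ℕ × ℕ) ∈ Q := by
    intro p hp
    rw [← hfix]
    exact Finset.mem_image_of_mem _ hp
  have h4 : 4 ∣ (Q.filter (fun p => ¬(2 * p.1 = n + 1 ∧ 2 * p.2 = n + 1))).card := by
    apply cyc4 (fun p : ℕ × ℕ => (n + 1 - p.2, p.1))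
    · rintro ⟨a, b⟩ hx
      rw [Finset.mem_filter] at hx ⊢
      have hbd := hb _ hx.1
      have hnc := hx.2
      refine ⟨hmemρ _ hx.1, ?_⟩
      dsimp only at *
      omega
    · rintro ⟨a, b⟩ hx
      rw [Finset.mem_filter] at hx
      have hbd := hb _ hx.1
      dsimp only at hbd
      simp only [Prod.mk.injEq]
      omega
    · rintro ⟨a, b⟩ hx he
      rw [Finset.mem_filter] at hx
      have hbd := hb _ hx.1
      have hnc := hx.2
      simp only [Prod.mk.injEq] at he
      dsimp only at *
      omega
  have hsplit := Finset.card_filter_add_card_filter_not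
    (s := Q) (p := fun p => ¬(2 * p.1 = n + 1 ∧ 2 * p.2 = n + 1))
  have hpos : (Q.filter (fun p => ¬¬(2 * p.1 = n + 1 ∧ 2 * p.2 = n + 1))).card ≤ 1 := by
    apply Finset.card_le_one.mpr
    rintro ⟨a, b⟩ hx ⟨c, d⟩ hy
    rw [Finset.mem_filter] at hx hy
    have h1 := hx.2
    have h2 := hy.2
    simp only [Prod.mk.injEq]
    dsimp only at h1 h2
    omega
  rw [hcard] at hsplit
  omega

/-- If `n ≡ 2 (mod 4)` or `n ≡ 3 (mod 4)`, then `4` divides `Q(n)`. -/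
theorem queensCount_div_four_of_mod (n : ℕ) (h : n % 4 = 2 ∨ n % 4 = 3) :
    4 ∣ queensCount n := by
  have hn2 : 2 ≤ n := by omega
  set S : Finset (Finset (ℕ × ℕ)) :=
    (board n).powerset.filter (fun Q => IsQueensConfig n Q) with hSdef
  have hS : ∀ Q, Q ∈ S ↔ IsQueensConfig n Q := by
    intro Q
    rw [hSdef, Finset.mem_filter, Finset.mem_powerset]
    exact ⟨fun h => h.2, fun h => ⟨h.1, h⟩⟩
  have hTU := Finset.card_filter_add_card_filter_not
    (s := S) (p := fun Q => rAct n (rAct n Q) = Q)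
  set T : Finset (Finset (ℕ × ℕ)) := S.filter (fun Q => rAct n (rAct n Q) = Q) with hTdef
  set U : Finset (Finset (ℕ × ℕ)) := S.filter (fun Q => ¬rAct n (rAct n Q) = Q) with hUdef
  have hmemT : ∀ Q ∈ T, IsQueensConfig n Q ∧ rAct n (rAct n Q) = Q := by
    intro Q hQ
    rw [hTdef, Finset.mem_filter] at hQ
    exact ⟨(hS Q).mp hQ.1, hQ.2⟩
  have hmemU : ∀ Q ∈ U, IsQueensConfig n Q ∧ rAct n (rAct n Q) ≠ Q := by
    intro Q hQ
    rw [hUdef, Finset.mem_filter] at hQ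
    exact ⟨(hS Q).mp hQ.1, hQ.2⟩
  have hU4 : 4 ∣ U.card := by
    apply cyc4 (rAct n) U
    · intro Q hQ
      obtain ⟨hc, hne⟩ := hmemU Q hQ
      rw [hUdef, Finset.mem_filter]
      refine ⟨(hS _).mpr (rAct_config hc), ?_⟩
      intro hfalse
      apply hne
      have := congrArg (rAct n) hfalse
      rw [rAct_four hc.1] at this
      exact this.symm
    · intro Q hQ
      exact rAct_four (hmemU Q hQ).1.1
    · intro Q hQ
      exact (hmemU Q hQ).2
  have hT4 : 4 ∣ T.card := by
    apply klein4 (sAct n) (rAct n) T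
    · intro Q hQ
      obtain ⟨hc, hfix⟩ := hmemT Q hQ
      rw [hTdef, Finset.mem_filter]
      refine ⟨(hS _).mpr (sAct_config hc), ?_⟩
      have := sr2_comm (n := n) (Q := Q) hc.1
      rw [hfix] at this
      exact this.symm
    · intro Q hQ
      obtain ⟨hc, hfix⟩ := hmemT Q hQ
      rw [hTdef, Finset.mem_filter]
      exact ⟨(hS _).mpr (rAct_config hc), congrArg (rAct n) hfix⟩
    · intro Q hQ
      exact sAct_sAct (hmemT Q hQ).1.1
    · intro Q hQ
      exact (hmemT Q hQ).2
    · intro Q hQ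
      obtain ⟨hc, hfix⟩ := hmemT Q hQ
      have key := rsr2 (n := n) (Q := Q) hc.1
      rw [hfix] at key
      -- key : rAct n (sAct n Q) = sAct n (rAct n Q)
      exact key.symm
    · intro Q hQ
      exact no_s_fixed (hmemT Q hQ).1 hn2
    · intro Q hQ
      obtain ⟨hc, _⟩ := hmemT Q hQ
      intro hfalse
      exact no_r_fixed hc h hfalse
    · intro Q hQ
      exact no_sr_fixed (hmemT Q hQ).1 hn2
  have : queensCount n = S.card := rfl
  rw [this]
  omega
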